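/- arXiv:2104.13967 — 2 statements merged into one kernel-verified Lean document; each statement's English description precedes it below -/
import Mathlib

section
/- For any absolutely continuous function w : [0,T] → ℝ and any γ ∈ (0,1), the Caputo fractional derivative satisfies the coercivity estimate w(t) · D_t^γ w(t) ≥ (1/2) · D_t^γ (w²)(t) for almost every t ∈ (0,T). -/
/-!
Fix `t` such that `s ↦ (t - s) ^ (-γ) * w' s` is integrable on `(0, t)`; this holds for a.e. `t`,
being a convolution of two integrable functions. With `k s = (t - s) ^ (-γ)` and
`h s = w t - w s = ∫ r in s..t, w' r`, the difference `w t * D^γ w t - ½ D^γ (w²) t` is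
`Γ(1 - γ)⁻¹ * ∫ s in 0..t, k s * w' s * h s`. Writing
`k s = t ^ (-γ) + ∫ u in 0..s, γ (t - u) ^ (-γ - 1)` and applying Fubini turns this integral into
`t ^ (-γ) * h 0 ^ 2 / 2 + ∫ u in 0..t, γ (t - u) ^ (-γ - 1) * h u ^ 2 / 2 ≥ 0`,
because `∫ s in u..t, w' s * h s = h u ^ 2 / 2`.
-/

open MeasureTheory Set Filter

/-- Caputo fractional derivative of order `γ ∈ (0,1)` of a real-valued function,
expressed through its a.e. derivative `w'`. -/
noncomputable def caputoDeriv (γ : ℝ) (w' : ℝ → ℝ) (t : ℝ) : ℝ :=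
  (Real.Gamma (1 - γ))⁻¹ * ∫ s in (0:ℝ)..t, (t - s) ^ (-γ) * w' s

theorem caputoDeriv_eq_setIntegral {γ t : ℝ} (ht : 0 ≤ t) (f : ℝ → ℝ) :
    caputoDeriv γ f t = (Real.Gamma (1 - γ))⁻¹ * ∫ s in Ioo 0 t, (t - s) ^ (-γ) * f s := by
  rw [caputoDeriv, intervalIntegral.integral_of_le ht, integral_Ioc_eq_integral_Ioo]

section Ioo

variable {a b : ℝ} {g : ℝ → ℝ}

theorem continuousOn_setIntegral_Ioo_left (hg : IntegrableOn g (Ioo a b)) :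
    ContinuousOn (fun s => ∫ r in Ioo s b, g r) (Icc a b) := by
  rcases lt_or_ge b a with hba | hab
  · simp [Icc_eq_empty_of_lt hba]
  rw [← integrableOn_Icc_iff_integrableOn_Ioo, ← uIcc_of_le hab] at hg
  rw [← uIcc_of_le hab]
  refine (intervalIntegral.continuousOn_primitive_interval_left hg).congr fun s hs => ?_
  rw [uIcc_of_le hab] at hs
  dsimp only
  rw [intervalIntegral.integral_of_le hs.2, integral_Ioc_eq_integral_Ioo]

theorem norm_setIntegral_Ioo_le {s : ℝ} (hg : IntegrableOn g (Ioo a b)) (hs : a ≤ s) :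
    ‖∫ r in Ioo s b, g r‖ ≤ ∫ r in Ioo a b, ‖g r‖ :=
  (norm_integral_le_integral_norm g).trans <| setIntegral_mono_set hg.norm
    (Eventually.of_forall fun _ => norm_nonneg _) (Ioo_subset_Ioo_left hs).eventuallyLE

theorem integrableOn_mul_setIntegral_Ioo {F : ℝ → ℝ} (hF : IntegrableOn F (Ioo a b))
    (hg : IntegrableOn g (Ioo a b)) :
    IntegrableOn (fun s => F s * ∫ r in Ioo s b, g r) (Ioo a b) :=
  hF.mul_bdd (((continuousOn_setIntegral_Ioo_left hg).mono Ioo_subset_Icc_self).aestronglyMeasurable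
    measurableSet_Ioo) ((ae_restrict_iff' measurableSet_Ioo).2 <| Eventually.of_forall
      fun _ hs => norm_setIntegral_Ioo_le hg hs.1.le)

theorem setIntegral_Ioo_setIntegral_Ioo_swap {H : ℝ → ℝ → ℝ}
    (hH : IntegrableOn (Function.uncurry H) {p | p.2 < p.1}
      ((volume.restrict (Ioo a b)).prod (volume.restrict (Ioo a b)))) :
    ∫ s in Ioo a b, ∫ u in Ioo a s, H s u = ∫ u in Ioo a b, ∫ s in Ioo u b, H s u := by
  have hT : MeasurableSet {p : ℝ × ℝ | p.2 < p.1} := measurableSet_lt measurable_snd measurable_fst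
  have hswap := integral_integral_swap
    (f := fun s u => {p : ℝ × ℝ | p.2 < p.1}.indicator (Function.uncurry H) (s, u))
    ((integrable_indicator_iff hT).2 hH)
  convert hswap using 1
  · refine setIntegral_congr_fun measurableSet_Ioo fun s hs => ?_
    have : ∀ u, {p : ℝ × ℝ | p.2 < p.1}.indicator (Function.uncurry H) (s, u)
        = (Iio s).indicator (H s) u := fun u => rfl
    simp only [this, setIntegral_indicator measurableSet_Iio, Ioo_inter_Iio, min_eq_right hs.2.le]
  · refine setIntegral_congr_fun measurableSet_Ioo fun u hu => ?_
    have : ∀ s, {p : ℝ × ℝ | p.2 < p.1}.indicator (Function.uncurry H) (s, u)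
        = (Ioi u).indicator (fun s => H s u) s := fun s => rfl
    simp only [this, setIntegral_indicator measurableSet_Ioi, Ioo_inter_Ioi, max_eq_right hu.1.le]

theorem setIntegral_Ioo_add_setIntegral_Ioo {r : ℝ} (hg : IntegrableOn g (Ioo a b))
    (hr : r ∈ Ioo a b) :
    (∫ s in Ioo a r, g s) + ∫ s in Ioo r b, g s = ∫ s in Ioo a b, g s := by
  rw [← Ioc_union_Ioo_eq_Ioo hr.1.le hr.2, setIntegral_union
    (disjoint_left.2 fun _ hx hx' => hx.2.not_gt hx'.1) measurableSet_Ioo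
    (hg.mono_set (Ioc_subset_Ioo_right hr.2)) (hg.mono_set (Ioo_subset_Ioo_left hr.1.le)),
    integral_Ioc_eq_integral_Ioo]

theorem setIntegral_mul_setIntegral_Ioo_eq_sq_div_two (hg : IntegrableOn g (Ioo a b)) :
    ∫ s in Ioo a b, g s * ∫ r in Ioo s b, g r = (∫ s in Ioo a b, g s) ^ 2 / 2 := by
  have hswap := setIntegral_Ioo_setIntegral_Ioo_swap (H := fun r s => g s * g r)
    ((hg.mul_prod hg).integrableOn.congr_fun (fun _ _ => mul_comm _ _)
      (measurableSet_lt measurable_snd measurable_fst))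
  have hsplit : ∀ r ∈ Ioo a b, ∫ s in Ioo a r, g s * g r
      = (∫ s in Ioo a b, g s) * g r - g r * ∫ s in Ioo r b, g s := fun r hr => by
    rw [integral_mul_const, ← setIntegral_Ioo_add_setIntegral_Ioo hg hr]
    ring
  simp only [integral_const_mul] at hswap
  rw [setIntegral_congr_fun measurableSet_Ioo hsplit, integral_sub (hg.const_mul _)
    (integrableOn_mul_setIntegral_Ioo hg hg), integral_const_mul] at hswap
  linear_combination (-1 / 2 : ℝ) * hswap

theorem setIntegral_primitive_mul_eq_setIntegral_mul_setIntegral_Ioo {φ G : ℝ → ℝ}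
    (hφ : ∀ s ∈ Ioo a b, IntegrableOn φ (Ioo a s)) (hφ_nonneg : ∀ u ∈ Ioo a b, 0 ≤ φ u)
    (hφm : AEStronglyMeasurable φ (volume.restrict (Ioo a b)))
    (hGm : AEStronglyMeasurable G (volume.restrict (Ioo a b)))
    (hint : IntegrableOn (fun s => (∫ u in Ioo a s, φ u) * G s) (Ioo a b)) :
    ∫ s in Ioo a b, (∫ u in Ioo a s, φ u) * G s = ∫ u in Ioo a b, φ u * ∫ s in Ioo u b, G s := by
  have hT : MeasurableSet {p : ℝ × ℝ | p.2 < p.1} := measurableSet_lt measurable_snd measurable_fst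
  have hslice : ∀ s u, {p : ℝ × ℝ | p.2 < p.1}.indicator (fun p => φ p.2 * G p.1) (s, u)
      = (Iio s).indicator (fun u => φ u * G s) u := fun _ _ => rfl
  have hH : IntegrableOn (Function.uncurry fun s u => φ u * G s) {p | p.2 < p.1}
      ((volume.restrict (Ioo a b)).prod (volume.restrict (Ioo a b))) := by
    have hm : AEStronglyMeasurable ({p : ℝ × ℝ | p.2 < p.1}.indicator
        (Function.uncurry fun s u => φ u * G s))
        ((volume.restrict (Ioo a b)).prod (volume.restrict (Ioo a b))) :=
      (hφm.comp_snd.mul hGm.comp_fst).indicator hT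
    rw [← integrable_indicator_iff hT, integrable_prod_iff hm]
    constructor
    · refine (ae_restrict_iff' measurableSet_Ioo).2 (Eventually.of_forall fun s hs => ?_)
      simp only [Function.uncurry_def, hslice]
      rw [integrable_indicator_iff measurableSet_Iio, IntegrableOn,
        Measure.restrict_restrict measurableSet_Iio, Iio_inter_Ioo, min_eq_left hs.2.le]
      exact (hφ s hs).mul_const _
    · refine hint.norm.congr ((ae_restrict_iff' measurableSet_Ioo).2
        (Eventually.of_forall fun s hs => ?_))
      simp only [Function.uncurry_def, hslice, norm_indicator_eq_indicator_norm]
      rw [setIntegral_indicator measurableSet_Iio, Ioo_inter_Iio, min_eq_right hs.2.le]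
      have hφ_nonneg' : ∀ u ∈ Ioo a s, 0 ≤ φ u := fun u hu => hφ_nonneg u ⟨hu.1, hu.2.trans hs.2⟩
      rw [norm_mul, Real.norm_of_nonneg (setIntegral_nonneg measurableSet_Ioo hφ_nonneg'),
        ← integral_mul_const]
      refine setIntegral_congr_fun measurableSet_Ioo fun u hu => ?_
      rw [norm_mul, Real.norm_of_nonneg (hφ_nonneg' u hu)]
  simpa only [integral_mul_const, integral_const_mul] using setIntegral_Ioo_setIntegral_Ioo_swap hH

end Ioo

theorem rpow_sub_sub_rpow_eq_setIntegral {γ t m : ℝ} (hm : 0 ≤ m) (hmt : m < t) :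
    (t - m) ^ (-γ) - t ^ (-γ) = ∫ u in Ioo 0 m, γ * (t - u) ^ (-γ - 1) := by
  rcases eq_or_ne γ 0 with rfl | hγ
  · simp
  have h0 : (0 : ℝ) ∉ uIcc (t - m) (t - 0) := by
    rw [uIcc_of_le (by linarith)]
    exact fun h => by linarith [h.1]
  rw [integral_const_mul, ← integral_Ioc_eq_integral_Ioo, ← intervalIntegral.integral_of_le hm,
    intervalIntegral.integral_comp_sub_left (fun x => x ^ (-γ - 1)),
    integral_rpow (Or.inr ⟨by simpa using hγ, h0⟩), sub_zero, sub_add_cancel]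
  field_simp
  ring

theorem ae_integrableOn_rpow_sub_mul {γ T : ℝ} {g : ℝ → ℝ} (hγ : γ < 1)
    (hg : IntegrableOn g (Ioo 0 T)) :
    ∀ᵐ t ∂volume.restrict (Ioo 0 T), IntegrableOn (fun s => (t - s) ^ (-γ) * g s) (Ioo 0 t) := by
  have hK : Integrable ((Ioo 0 T).indicator fun x : ℝ => x ^ (-γ)) :=
    (integrable_indicator_iff measurableSet_Ioo).2
      ((intervalIntegral.intervalIntegrable_rpow' (by linarith)).1.mono_set Ioo_subset_Ioc_self)
  have hconv := ((integrable_indicator_iff measurableSet_Ioo).2 hg).ae_convolution_exists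
    (ContinuousLinearMap.mul ℝ ℝ) hK
  filter_upwards [ae_restrict_of_ae hconv, ae_restrict_mem measurableSet_Ioo] with t ht htT
  refine (ht.integrableOn (s := Ioo 0 t)).congr_fun (fun s hs => ?_) measurableSet_Ioo
  have hs' : s ∈ Ioo 0 T := ⟨hs.1, hs.2.trans htT.2⟩
  have hts : t - s ∈ Ioo 0 T := ⟨by linarith [hs.2], by linarith [hs.1, htT.2]⟩
  simp [indicator_of_mem hs', indicator_of_mem hts, mul_comm]

theorem setIntegral_rpow_sub_mul_mul_setIntegral_Ioo_nonneg {γ t : ℝ} {g : ℝ → ℝ} (hγ : 0 ≤ γ)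
    (hg : IntegrableOn g (Ioo 0 t)) (hkg : IntegrableOn (fun s => (t - s) ^ (-γ) * g s) (Ioo 0 t)) :
    0 ≤ ∫ s in Ioo 0 t, (t - s) ^ (-γ) * g s * ∫ r in Ioo s t, g r := by
  rcases le_or_gt t 0 with ht | ht
  · simp [Ioo_eq_empty_of_le ht]
  set φ : ℝ → ℝ := fun u => γ * (t - u) ^ (-γ - 1)
  have hk : ∀ s ∈ Ioo 0 t, (t - s) ^ (-γ) = t ^ (-γ) + ∫ u in Ioo 0 s, φ u := fun s hs => by
    rw [← rpow_sub_sub_rpow_eq_setIntegral hs.1.le hs.2, add_sub_cancel]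
  have hgh := integrableOn_mul_setIntegral_Ioo hg hg
  have hφgh : IntegrableOn (fun s => (∫ u in Ioo 0 s, φ u) * (g s * ∫ r in Ioo s t, g r))
      (Ioo 0 t) := by
    refine ((integrableOn_mul_setIntegral_Ioo hkg hg).sub (hgh.const_mul (t ^ (-γ)))).congr_fun
      (fun s hs => ?_) measurableSet_Ioo
    simp only [Pi.sub_apply, hk s hs]
    ring
  have hφ : ∀ s ∈ Ioo 0 t, IntegrableOn φ (Ioo 0 s) := fun s hs => by
    refine (ContinuousOn.integrableOn_Icc ?_).mono_set Ioo_subset_Icc_self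
    exact continuousOn_const.mul ((continuousOn_const.sub continuousOn_id).rpow_const
      fun u hu => Or.inl (sub_ne_zero.2 (ne_of_gt (show u < t by linarith [hu.2, hs.2]))))
  have hφ_nonneg : ∀ u ∈ Ioo 0 t, 0 ≤ φ u := fun u hu =>
    mul_nonneg hγ (Real.rpow_nonneg (by linarith [hu.2]) _)
  have hsplit : ∫ s in Ioo 0 t, (t - s) ^ (-γ) * g s * ∫ r in Ioo s t, g r
      = t ^ (-γ) * ((∫ s in Ioo 0 t, g s) ^ 2 / 2)
        + ∫ u in Ioo 0 t, φ u * ((∫ r in Ioo u t, g r) ^ 2 / 2) := calc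
    _ = ∫ s in Ioo 0 t, (t ^ (-γ) * (g s * ∫ r in Ioo s t, g r)
          + (∫ u in Ioo 0 s, φ u) * (g s * ∫ r in Ioo s t, g r)) :=
        setIntegral_congr_fun measurableSet_Ioo fun s hs => by rw [hk s hs]; ring
    _ = t ^ (-γ) * (∫ s in Ioo 0 t, g s * ∫ r in Ioo s t, g r)
          + ∫ u in Ioo 0 t, φ u * ∫ s in Ioo u t, g s * ∫ r in Ioo s t, g r := by
        rw [integral_add (hgh.const_mul _) hφgh, integral_const_mul,
          setIntegral_primitive_mul_eq_setIntegral_mul_setIntegral_Ioo hφ hφ_nonneg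
            (by fun_prop) hgh.aestronglyMeasurable hφgh]
    _ = _ := by
        rw [setIntegral_mul_setIntegral_Ioo_eq_sq_div_two hg]
        congr 1
        refine setIntegral_congr_fun measurableSet_Ioo fun u hu => ?_
        rw [setIntegral_mul_setIntegral_Ioo_eq_sq_div_two
          (hg.mono_set (Ioo_subset_Ioo_left hu.1.le))]
  rw [hsplit]
  exact add_nonneg (mul_nonneg (Real.rpow_nonneg ht.le _) (by positivity))
    (setIntegral_nonneg measurableSet_Ioo fun u hu => mul_nonneg (hφ_nonneg u hu) (by positivity))

/-- `w` is absolutely continuous with a.e. derivative `w'`, so `2 * w * w'` is the a.e.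
derivative of `w ^ 2`. -/
theorem alikhanov_coercivity_general (T γ : ℝ) (hγ : γ ∈ Set.Ioo (0:ℝ) 1)
    (w w' : ℝ → ℝ)
    (hAC : ∀ t ∈ Set.Icc (0:ℝ) T, w t = w 0 + ∫ s in (0:ℝ)..t, w' s)
    (hint : IntervalIntegrable w' volume 0 T) :
    ∀ᵐ t ∂(volume.restrict (Set.Ioo (0:ℝ) T)),
      w t * caputoDeriv γ w' t ≥ (1/2) * caputoDeriv γ (fun s => 2 * w s * w' s) t := by
  obtain ⟨hγ0, hγ1⟩ := hγ
  have hw' : IntegrableOn w' (Ioo 0 T) := hint.1.mono_set Ioo_subset_Ioc_self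
  filter_upwards [ae_integrableOn_rpow_sub_mul hγ1 hw', ae_restrict_mem measurableSet_Ioo]
    with t hkw' ⟨ht0, htT⟩
  have hw't : IntegrableOn w' (Ioo 0 t) := hw'.mono_set (Ioo_subset_Ioo_right htT.le)
  have hw_eq : ∀ s ∈ Icc 0 t, w s = w 0 + ∫ r in Ioo 0 s, w' r := fun s hs => by
    rw [hAC s ⟨hs.1, hs.2.trans htT.le⟩, intervalIntegral.integral_of_le hs.1,
      integral_Ioc_eq_integral_Ioo]
  have hw : ∀ s ∈ Ioo 0 t, w s = w t - ∫ r in Ioo s t, w' r := fun s hs => by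
    rw [hw_eq t (right_mem_Icc.2 ht0.le), hw_eq s (Ioo_subset_Icc_self hs),
      ← setIntegral_Ioo_add_setIntegral_Ioo hw't hs]
    ring
  have hkw'h := integrableOn_mul_setIntegral_Ioo hkw' hw't
  have hdiff : w t * caputoDeriv γ w' t - 1 / 2 * caputoDeriv γ (fun s => 2 * w s * w' s) t
      = (Real.Gamma (1 - γ))⁻¹ * ∫ s in Ioo 0 t, (t - s) ^ (-γ) * w' s * ∫ r in Ioo s t, w' r := by
    have hsq : ∫ s in Ioo 0 t, (t - s) ^ (-γ) * (2 * w s * w' s)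
        = ∫ s in Ioo 0 t, (2 * w t * ((t - s) ^ (-γ) * w' s)
            - 2 * ((t - s) ^ (-γ) * w' s * ∫ r in Ioo s t, w' r)) :=
      setIntegral_congr_fun measurableSet_Ioo fun s hs => by rw [hw s hs]; ring
    rw [caputoDeriv_eq_setIntegral ht0.le, caputoDeriv_eq_setIntegral ht0.le, hsq,
      integral_sub (hkw'.const_mul _) (hkw'h.const_mul _), integral_const_mul, integral_const_mul]
    ring
  have hΓ : 0 < Real.Gamma (1 - γ) := Real.Gamma_pos_of_pos (by linarith)
  have hnonneg := mul_nonneg (inv_nonneg.2 hΓ.le)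
    (setIntegral_rpow_sub_mul_mul_setIntegral_Ioo_nonneg hγ0.le hw't hkw')
  linarith

/-- Alikhanov's coercivity estimate: for any absolutely continuous `w` (encoded via the
fundamental theorem of calculus with integrable derivative `w'`) and `γ ∈ (0,1)`,
`w(t) · D_t^γ w(t) ≥ (1/2) · D_t^γ (w²)(t)` for a.e. `t ∈ (0,T)`.  Note that the
derivative of `w²` is `2 w w'`. -/
theorem alikhanov_coercivity (T γ : ℝ) (hT : 0 < T) (hγ : γ ∈ Set.Ioo (0:ℝ) 1)
    (w w' : ℝ → ℝ)
    (hAC : ∀ t ∈ Set.Icc (0:ℝ) T, w t = w 0 + ∫ s in (0:ℝ)..t, w' s)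
    (hint : IntervalIntegrable w' volume 0 T) :
    ∀ᵐ t ∂(volume.restrict (Set.Ioo (0:ℝ) T)),
      w t * caputoDeriv γ w' t ≥ (1/2) * caputoDeriv γ (fun s => 2 * w s * w' s) t :=
  alikhanov_coercivity_general T γ hγ w w' hAC hint
end

section
/- For τ > 0, ‖k_α - k_1‖_{L^1(0,T)} → 0 as α → 1⁻, where k_α(t) = τ^{-α} t^{α-1} E_{α,α}(-(t/τ)^α) and k_1(t) = τ^{-1} exp(-t/τ). -/
open MeasureTheory Set Filter

/-- The two-parameter Mittag-Leffler function `E_{a,b}(z) = Σ_{k≥0} z^k / Γ(ak+b)`. -/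
noncomputable def mittagLeffler (a b z : ℝ) : ℝ :=
  ∑' k : ℕ, z ^ k / Real.Gamma (a * k + b)

/-- The kernel `k_α(t) = τ^{-α} t^{α-1} E_{α,α}(-(t/τ)^α)`. -/
noncomputable def mlKernel (α τ t : ℝ) : ℝ :=
  τ ^ (-α) * t ^ (α - 1) * mittagLeffler α α (-((t / τ) ^ α))

/-!
Since `Γ(x) = (x - 1) Γ(x - 1)`, the Gamma function outgrows every exponential, so for `|z| ≤ m`
and `a, b ≥ c > 0` the terms `z^k / Γ(ak + b)` are dominated by one geometric series. Hence
`E_{a,b}(z)` is jointly continuous in `a, b > 0` and `z`, and `k_α(t) → k_1(t)` for `t > 0`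
because `E_{1,1} = exp`. The same domination gives `|k_α(t)| ≤ C (t^{-1/2} + 1)` for
`α ∈ [1/2, 1]`, an integrable bound on `(0, T]`, and dominated convergence concludes.
-/

open Topology

lemma Real.continuousOn_Gamma_Ioi : ContinuousOn Real.Gamma (Ioi 0) := fun x hx =>
  (Real.differentiableAt_Gamma fun m => by
    have := m.cast_nonneg (α := ℝ)
    rw [mem_Ioi] at hx
    linarith).continuousAt.continuousWithinAt

lemma Real.exists_pos_mul_rpow_le_Gamma {c R : ℝ} (hc : 0 < c) (hR : 1 ≤ R) :
    ∃ δ > 0, ∀ x, c ≤ x → δ * R ^ x ≤ Real.Gamma x := by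
  obtain ⟨x₀, hx₀, hmin⟩ := isCompact_Icc.exists_isMinOn (nonempty_Icc.2 (by linarith))
    (continuousOn_Gamma_Ioi.mono fun x (hx : x ∈ Icc c (c + R + 1)) => hc.trans_le hx.1)
  have hR₀ : 0 < R := by linarith
  set δ := Real.Gamma x₀ / R ^ (c + R + 1)
  have hδ : 0 < δ := div_pos (Gamma_pos_of_pos (hc.trans_le hx₀.1)) (by positivity)
  have base (x : ℝ) (hx : x ∈ Icc c (c + R + 1)) : δ * R ^ x ≤ Real.Gamma x := by
    calc δ * R ^ x = Real.Gamma x₀ * (R ^ x / R ^ (c + R + 1)) := by ring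
      _ ≤ Real.Gamma x₀ * 1 := by
        gcongr
        · exact (Gamma_pos_of_pos (hc.trans_le hx₀.1)).le
        · exact div_le_one_of_le₀ (rpow_le_rpow_of_exponent_le hR hx.2) (by positivity)
      _ ≤ Real.Gamma x := by simpa using hmin hx
  have up_to (n : ℕ) : ∀ x, c ≤ x → x ≤ c + R + 1 + n → δ * R ^ x ≤ Real.Gamma x := by
    induction n with
    | zero => exact fun x hx hx' => base x ⟨hx, by simpa using hx'⟩
    | succ n ih =>
      intro x hx hx'
      rcases le_or_gt x (c + R + 1 + n) with h | h
      · exact ih x hx h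
      have hx₁ : R ≤ x - 1 := by linarith [n.cast_nonneg (α := ℝ)]
      calc δ * R ^ x = R * (δ * R ^ (x - 1)) := by
            rw [rpow_sub hR₀, rpow_one]; field_simp
        _ ≤ (x - 1) * Real.Gamma (x - 1) := by
            gcongr
            · linarith
            · exact ih _ (by linarith) (by push_cast at hx'; linarith)
        _ = Real.Gamma x := by rw [← Gamma_add_one (by linarith), sub_add_cancel]
  exact ⟨δ, hδ, fun x hx => up_to ⌈x⌉₊ x hx (by linarith [Nat.le_ceil x])⟩

lemma exists_summable_bound_mittagLeffler_term {c : ℝ} (hc : 0 < c) (m : ℝ) :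
    ∃ B : ℕ → ℝ, Summable B ∧ ∀ a b z : ℝ, c ≤ a → c ≤ b → |z| ≤ m → ∀ k : ℕ,
      ‖z ^ k / Real.Gamma (a * k + b)‖ ≤ B k := by
  -- `R = u^(1/c)` turns `R^(c(k+1)) ≤ R^(ak+b)` into the geometric factor `u^(k+1)`.
  set u := |m| + 1
  have hu : 1 ≤ u := by simp [u]
  obtain ⟨δ, hδ, hΓ⟩ :=
    Real.exists_pos_mul_rpow_le_Gamma hc (Real.one_le_rpow hu (inv_pos.2 hc).le)
  have hq : |m / u| < 1 := by
    rw [abs_div, abs_of_pos (by positivity : 0 < u), div_lt_one (by positivity)]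
    simp [u]
  refine ⟨fun k => (δ * u)⁻¹ * (m / u) ^ k,
    (summable_geometric_of_abs_lt_one hq).mul_left _, fun a b z ha hb hz k => ?_⟩
  have hk := k.cast_nonneg (α := ℝ)
  have hΓk : δ * u ^ (k + 1) ≤ Real.Gamma (a * k + b) :=
    calc δ * u ^ (k + 1) = δ * (u ^ c⁻¹) ^ (c * (k + 1)) := by
          rw [← Real.rpow_mul (by positivity), inv_mul_cancel_left₀ hc.ne', ← Real.rpow_natCast]
          push_cast; rfl
      _ ≤ δ * (u ^ c⁻¹) ^ (a * k + b) := by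
          gcongr
          · exact Real.one_le_rpow hu (inv_pos.2 hc).le
          · nlinarith
      _ ≤ Real.Gamma (a * k + b) := hΓ _ (by nlinarith)
  rw [norm_div, norm_pow, Real.norm_eq_abs, Real.norm_of_nonneg (hΓk.trans' (by positivity))]
  calc |z| ^ k / Real.Gamma (a * k + b) ≤ m ^ k / (δ * u ^ (k + 1)) :=
        div_le_div₀ (pow_nonneg ((abs_nonneg z).trans hz) k)
          (pow_le_pow_left₀ (abs_nonneg z) hz k) (by positivity) hΓk
    _ = (δ * u)⁻¹ * (m / u) ^ k := by
        rw [div_pow, pow_succ]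
        field_simp

lemma exists_abs_mittagLeffler_le {c : ℝ} (hc : 0 < c) (m : ℝ) :
    ∃ S, ∀ a b z, c ≤ a → c ≤ b → |z| ≤ m → |mittagLeffler a b z| ≤ S := by
  obtain ⟨B, hB, hbound⟩ := exists_summable_bound_mittagLeffler_term hc m
  exact ⟨∑' k, B k, fun a b z ha hb hz =>
    tsum_of_norm_bounded hB.hasSum (hbound a b z ha hb hz)⟩

lemma tendsto_mittagLeffler {ι : Type*} {l : Filter ι} {fa fb fz : ι → ℝ} {a b z : ℝ}
    (ha : Tendsto fa l (𝓝 a)) (hb : Tendsto fb l (𝓝 b)) (hz : Tendsto fz l (𝓝 z))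
    (ha₀ : 0 < a) (hb₀ : 0 < b) :
    Tendsto (fun i => mittagLeffler (fa i) (fb i) (fz i)) l (𝓝 (mittagLeffler a b z)) := by
  obtain ⟨B, hB, hbound⟩ :=
    exists_summable_bound_mittagLeffler_term (c := min a b / 2) (by positivity) (|z| + 1)
  unfold mittagLeffler
  refine tendsto_tsum_of_dominated_convergence hB (fun k => ?_) ?_
  · have hx : 0 < a * k + b := by positivity
    exact (hz.pow k).div
      ((Real.continuousOn_Gamma_Ioi.continuousAt (Ioi_mem_nhds hx)).tendsto.comp
        ((ha.mul_const _).add hb)) (Real.Gamma_pos_of_pos hx).ne'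
  · have hc : min a b / 2 < min a b := by linarith [lt_min ha₀ hb₀]
    filter_upwards [ha.eventually (eventually_ge_nhds (hc.trans_le (min_le_left a b))),
      hb.eventually (eventually_ge_nhds (hc.trans_le (min_le_right a b))),
      hz.abs.eventually (eventually_le_nhds (lt_add_one |z|))] with i hai hbi hzi
    exact hbound _ _ _ hai hbi hzi

lemma continuous_mittagLeffler {a b : ℝ} (ha : 0 < a) (hb : 0 < b) :
    Continuous (mittagLeffler a b) :=
  continuous_iff_continuousAt.2 fun _ =>
    tendsto_mittagLeffler tendsto_const_nhds tendsto_const_nhds tendsto_id ha hb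

lemma mittagLeffler_one_one (z : ℝ) : mittagLeffler 1 1 z = Real.exp z := by
  rw [Real.exp_eq_exp_ℝ, NormedSpace.exp_eq_tsum_div]
  simp [mittagLeffler, Real.Gamma_nat_eq_factorial]

lemma Real.rpow_le_rpow_add_rpow {x p q s : ℝ} (hx : 0 < x) (hp : p ≤ s) (hq : s ≤ q) :
    x ^ s ≤ x ^ p + x ^ q := by
  rcases le_total x 1 with h | h
  · linarith [rpow_le_rpow_of_exponent_ge hx h hp, rpow_pos_of_pos hx q]
  · linarith [rpow_le_rpow_of_exponent_le h hq, rpow_pos_of_pos hx p]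

lemma tendsto_mlKernel_one {τ t : ℝ} (hτ : 0 < τ) (ht : 0 < t) :
    Tendsto (fun α => mlKernel α τ t) (𝓝 1) (𝓝 (τ⁻¹ * Real.exp (-(t / τ)))) := by
  have hτα : Tendsto (fun α : ℝ => τ ^ (-α)) (𝓝 1) (𝓝 τ⁻¹) := by
    simpa [Real.rpow_neg_one] using
      tendsto_const_nhds.rpow (tendsto_id (x := 𝓝 (1 : ℝ))).neg (Or.inl hτ.ne')
  have htα : Tendsto (fun α : ℝ => t ^ (α - 1)) (𝓝 1) (𝓝 1) := by
    simpa using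
      tendsto_const_nhds.rpow ((tendsto_id (x := 𝓝 (1 : ℝ))).sub_const 1) (Or.inl ht.ne')
  have hz : Tendsto (fun α : ℝ => -((t / τ) ^ α)) (𝓝 1) (𝓝 (-(t / τ))) := by
    simpa using
      (tendsto_const_nhds.rpow (tendsto_id (x := 𝓝 (1 : ℝ))) (Or.inl (div_pos ht hτ).ne')).neg
  have hE : Tendsto (fun α : ℝ => mittagLeffler α α (-((t / τ) ^ α))) (𝓝 1)
      (𝓝 (Real.exp (-(t / τ)))) := by
    simpa only [mittagLeffler_one_one, id] using
      tendsto_mittagLeffler tendsto_id tendsto_id hz one_pos one_pos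
  simpa only [mlKernel, mul_one] using (hτα.mul htα).mul hE

lemma exists_abs_mlKernel_le {τ : ℝ} (hτ : 0 < τ) (T : ℝ) :
    ∃ C, ∀ α t, 1 / 2 ≤ α → α ≤ 1 → t ∈ Ioc 0 T →
      |mlKernel α τ t| ≤ C * (t ^ (-(1 / 2) : ℝ) + 1) := by
  obtain ⟨S, hS⟩ := exists_abs_mittagLeffler_le (c := 1 / 2) (by norm_num) (1 + T / τ)
  refine ⟨(τ ^ (-1 : ℝ) + τ ^ (-(1 / 2) : ℝ)) * S, fun α t hα₁ hα₂ ht => ?_⟩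
  have ht₀ := ht.1
  have hτα : τ ^ (-α) ≤ τ ^ (-1 : ℝ) + τ ^ (-(1 / 2) : ℝ) :=
    Real.rpow_le_rpow_add_rpow hτ (by linarith) (by linarith)
  have htα : t ^ (α - 1) ≤ t ^ (-(1 / 2) : ℝ) + 1 := by
    simpa using Real.rpow_le_rpow_add_rpow (q := 0) ht₀ (by linarith) (by linarith)
  have hz : |-((t / τ) ^ α)| ≤ 1 + T / τ := by
    rw [abs_neg, abs_of_pos (by positivity)]
    calc (t / τ) ^ α ≤ (t / τ) ^ (0 : ℝ) + (t / τ) ^ (1 : ℝ) :=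
          Real.rpow_le_rpow_add_rpow (by positivity) (by linarith) hα₂
      _ ≤ 1 + T / τ := by
          simp only [Real.rpow_zero, Real.rpow_one]
          gcongr
          exact ht.2
  have hE := hS α α _ hα₁ hα₁ hz
  rw [mlKernel, abs_mul, abs_mul, abs_of_pos (by positivity), abs_of_pos (by positivity)]
  calc τ ^ (-α) * t ^ (α - 1) * |mittagLeffler α α (-((t / τ) ^ α))|
      ≤ (τ ^ (-1 : ℝ) + τ ^ (-(1 / 2) : ℝ)) * (t ^ (-(1 / 2) : ℝ) + 1) * S := by
        gcongr
    _ = _ := by ring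

lemma continuousOn_mlKernel {α τ : ℝ} (hα : 0 < α) (hτ : 0 < τ) :
    ContinuousOn (mlKernel α τ) (Ioi 0) := by
  intro t (ht : 0 < t)
  have hE := (continuous_mittagLeffler hα hα).continuousAt (x := -((t / τ) ^ α))
  have hz : ContinuousAt (fun s : ℝ => -((s / τ) ^ α)) t :=
    ((continuousAt_id.div_const τ).rpow_const (Or.inl (div_pos ht hτ).ne')).neg
  exact ((continuousAt_const.mul (continuousAt_id.rpow_const (Or.inl ht.ne'))).mul
    (ContinuousAt.comp (f := fun s : ℝ => -((s / τ) ^ α)) hE hz)).continuousWithinAt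

/-- `‖k_α - k_1‖_{L¹(0,T)} → 0` as `α → 1⁻`, where `k_1(t) = τ⁻¹ exp(-t/τ)`. -/
theorem mlKernel_L1_limit (T τ : ℝ) (hT : 0 < T) (hτ : 0 < τ) :
    Filter.Tendsto
      (fun α : ℝ => ∫ t in (0:ℝ)..T, |mlKernel α τ t - τ⁻¹ * Real.exp (-(t / τ))|)
      (nhdsWithin 1 (Set.Iio (1:ℝ))) (nhds 0) := by
  obtain ⟨C, hC⟩ := exists_abs_mlKernel_le hτ T
  have hα : ∀ᶠ α in 𝓝[<] (1 : ℝ), α ∈ Ioo (1 / 2) 1 := Ioo_mem_nhdsLT (by norm_num)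
  have hk₁ : Continuous fun t : ℝ => τ⁻¹ * Real.exp (-(t / τ)) := by fun_prop
  conv => enter [3, 1]; rw [← intervalIntegral.integral_zero (a := 0) (b := T) (μ := volume)]
  refine intervalIntegral.tendsto_integral_filter_of_dominated_convergence
    (fun t => C * (t ^ (-(1 / 2) : ℝ) + 1) + τ⁻¹) ?_ ?_ ?_ ?_
  · rw [uIoc_of_le hT.le]
    filter_upwards [hα] with α hα
    exact (((continuousOn_mlKernel (by linarith [hα.1]) hτ).mono Ioc_subset_Ioi_self).sub
      hk₁.continuousOn).abs.aestronglyMeasurable measurableSet_Ioc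
  · rw [uIoc_of_le hT.le]
    filter_upwards [hα] with α hα
    refine ae_of_all _ fun t ht => ?_
    have hk₁t : |τ⁻¹ * Real.exp (-(t / τ))| ≤ τ⁻¹ := by
      rw [abs_of_pos (by positivity)]
      exact mul_le_of_le_one_right (by positivity)
        (Real.exp_le_one_iff.2 (neg_nonpos.2 (div_nonneg ht.1.le hτ.le)))
    rw [Real.norm_eq_abs, abs_abs]
    exact (abs_sub _ _).trans (add_le_add (hC α t hα.1.le hα.2.le ht) hk₁t)
  · exact (((intervalIntegral.intervalIntegrable_rpow' (by norm_num)).add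
      intervalIntegrable_const).const_mul C).add intervalIntegrable_const
  · rw [uIoc_of_le hT.le]
    refine ae_of_all _ fun t ht => ?_
    simpa using (((tendsto_mlKernel_one hτ ht.1).mono_left nhdsWithin_le_nhds).sub_const
      (τ⁻¹ * Real.exp (-(t / τ)))).abs
end
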